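/- arXiv:2207.06775 — 3 statements merged into one kernel-verified Lean document; each statement's English description precedes it below -/
import Mathlib

section
/- Let l ≥ d+1, let D_L ∈ ℝ^{l×l} be symmetric with nonnegative entries and zero diagonal, let κ > 0, and set A_L := cosh(√κ D_L) (cosh applied entrywise). Let A_L = Q diag(λ₁, …, λ_l) Q^⊤ be an eigendecomposition with Q orthogonal with columns q₁, …, q_l and λ₁ ≥ λ₂ ≥ ⋯ ≥ λ_l, and assume λ_{l−d+1} < 0 (i.e. A_L has at least d strictly negative eigenvalues). Then λ₁ > 0, and the matrix X̂_L ∈ ℝ^{l×(d+1)} with columns √λ₁ q₁, √(−λ_{l−d+1}) q_{l−d+1}, …, √(−λ_l) q_l satisfies ‖A_L − X̂_L J X̂_L^⊤‖_F ≤ ‖A_L − X J X^⊤‖_F for every X ∈ ℝ^{l×(d+1)}. -/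
open Matrix Finset

/-- The Lorentz signature matrix `J = diag(1, -1, …, -1)` of size `(d+1) × (d+1)`. -/
noncomputable def lorJ (d : ℕ) : Matrix (Fin (d + 1)) (Fin (d + 1)) ℝ :=
  Matrix.diagonal (fun i => if i = 0 then (1 : ℝ) else -1)

/-- The Lorentz product `x ∘ y = x₁y₁ - (x₂y₂ + ⋯ + x_{d+1}y_{d+1})`. -/
noncomputable def lprod (d : ℕ) (x y : Fin (d + 1) → ℝ) : ℝ :=
  x 0 * y 0 - ∑ i : Fin d, x i.succ * y i.succ

/-- The hyperboloid `H_d = {x : x ∘ x = 1, x₁ > 0}`. -/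
def onHyperboloid (d : ℕ) (x : Fin (d + 1) → ℝ) : Prop :=
  lprod d x x = 1 ∧ 0 < x 0

/-- The inverse hyperbolic cosine. -/
noncomputable def arcosh (x : ℝ) : ℝ :=
  Real.log (x + Real.sqrt (x ^ 2 - 1))

/-- The hyperbolic distance with curvature `-κ`. -/
noncomputable def distH (d : ℕ) (κ : ℝ) (x y : Fin (d + 1) → ℝ) : ℝ :=
  (1 / Real.sqrt κ) * arcosh (lprod d x y)

/-- A positive Lorentz matrix: `Tᵀ J T = J` and `T₁₁ > 0`. -/
def IsPosLorentz (d : ℕ) (T : Matrix (Fin (d + 1)) (Fin (d + 1)) ℝ) : Prop :=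
  Tᵀ * lorJ d * T = lorJ d ∧ 0 < T 0 0

/-- The eigenvalue index selected for column `j` of the `L-hydra` embedding:
column `0` selects eigenvalue index `0` (the largest eigenvalue `λ₁`), and column
`j ≥ 1` selects the `j`-th of the `d` smallest eigenvalues `λ_{l-d+1}, …, λ_l`
(in 0-based indexing: `l - d - 1 + j`). -/
def colIdx {d l : ℕ} (hl : d + 1 ≤ l) (j : Fin (d + 1)) : Fin l :=
  if (j : ℕ) = 0 then ⟨0, by omega⟩ else ⟨l - d - 1 + j, by have := j.isLt; omega⟩

/-- The landmark embedding matrix `X̂_L` with columns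
`√λ₁ q₁, √(−λ_{l−d+1}) q_{l−d+1}, …, √(−λ_l) q_l`. -/
noncomputable def hatXL {d l : ℕ} (hl : d + 1 ≤ l) (Q : Matrix (Fin l) (Fin l) ℝ)
    (lam : Fin l → ℝ) : Matrix (Fin l) (Fin (d + 1)) ℝ :=
  Matrix.of fun i j =>
    (if (j : ℕ) = 0 then Real.sqrt (lam (colIdx hl j))
      else Real.sqrt (-lam (colIdx hl j))) * Q i (colIdx hl j)

/-- The diagonal matrix `diag(1/λ₁, −1/λ_{l−d+1}, …, −1/λ_l)`. -/
noncomputable def hatD {d l : ℕ} (hl : d + 1 ≤ l) (lam : Fin l → ℝ) :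
    Matrix (Fin (d + 1)) (Fin (d + 1)) ℝ :=
  Matrix.diagonal fun j =>
    if (j : ℕ) = 0 then 1 / lam (colIdx hl j) else -(1 / lam (colIdx hl j))

/-- The non-landmark embedding matrix `X̂_N = A_N X̂_L diag(1/λ₁, −1/λ_{l−d+1}, …, −1/λ_l)`. -/
noncomputable def hatXN {d l m : ℕ} (hl : d + 1 ≤ l) (A_N : Matrix (Fin m) (Fin l) ℝ)
    (Q : Matrix (Fin l) (Fin l) ℝ) (lam : Fin l → ℝ) : Matrix (Fin m) (Fin (d + 1)) ℝ :=
  A_N * hatXL hl Q lam * hatD hl lam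

/-- The squared Frobenius norm of a matrix. -/
noncomputable def frobSq {a b : ℕ} (A : Matrix (Fin a) (Fin b) ℝ) : ℝ :=
  ∑ i, ∑ j, (A i j) ^ 2

/-- The Frobenius norm of a matrix. -/
noncomputable def frob {a b : ℕ} (A : Matrix (Fin a) (Fin b) ℝ) : ℝ :=
  Real.sqrt (frobSq A)

/-! Write `A_L = Q diag(λ) Qᵀ`. The residual `A_L - X̂_L J X̂_Lᵀ` is `Q diag(λ') Qᵀ`, where `λ'`
keeps `λᵢ` for `1 ≤ i < l - d` and vanishes elsewhere. For any other `X`, conjugating by `Q`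
turns `X J Xᵀ` into `B = Y J Yᵀ = W diag(μ) Wᵀ`, with `Y = Qᵀ X` and `μ` decreasing. In the
eigenbasis the quadratic form of `B` is `c ↦ (Tc)ᵀ J (Tc)` with `T = Yᵀ W`, which is `≤ 0` on a
subspace of codimension one and `≥ 0` on one of codimension `d`; hence `B` has at most one
positive and at most `d` negative eigenvalues, and `μᵢ = 0` for `1 ≤ i < l - d`. The
Hoffman–Wielandt inequality `‖diag λ - B‖_F² ≥ ∑ (λᵢ - μᵢ)²` now bounds the residual of `X`
below by that of `X̂_L`. It holds because `tr(diag λ · B) = λ ⬝ S μ` with `S = (Wᵢₖ²)` doubly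
stochastic, and by Birkhoff's theorem and the rearrangement inequality `λ ⬝ S μ ≤ λ ⬝ μ`.
Finally `λ₁ > 0` because `tr A_L = l`. -/

lemma frobSq_eq_trace {a b : ℕ} (A : Matrix (Fin a) (Fin b) ℝ) :
    frobSq A = trace (Aᵀ * A) := by
  simp only [frobSq, trace, Matrix.diag, mul_apply, transpose_apply, sq]
  exact Finset.sum_comm

lemma frobSq_conj {n : ℕ} {Q : Matrix (Fin n) (Fin n) ℝ} (hQ : Qᵀ * Q = 1)
    (M : Matrix (Fin n) (Fin n) ℝ) : frobSq (Q * M * Qᵀ) = frobSq M := by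
  have hgram : (Q * M * Qᵀ)ᵀ * (Q * M * Qᵀ) = Q * (Mᵀ * M) * Qᵀ := by
    simp only [transpose_mul, transpose_transpose, Matrix.mul_assoc]
    rw [← Matrix.mul_assoc Qᵀ Q, hQ, Matrix.one_mul]
  rw [frobSq_eq_trace, frobSq_eq_trace, hgram, trace_mul_cycle, ← Matrix.mul_assoc, hQ,
    Matrix.one_mul]

lemma frobSq_diagonal {n : ℕ} (v : Fin n → ℝ) : frobSq (diagonal v) = ∑ i, v i ^ 2 := by
  refine Finset.sum_congr rfl fun i _ => ?_
  rw [Finset.sum_eq_single i (fun j _ hj => by simp [diagonal_apply_ne _ hj.symm]) (by simp),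
    diagonal_apply_eq]

lemma frobSq_sub {a b : ℕ} (M N : Matrix (Fin a) (Fin b) ℝ) :
    frobSq (M - N) = frobSq M - 2 * ∑ i, ∑ j, M i j * N i j + frobSq N := by
  simp only [frobSq, Matrix.sub_apply, sub_sq, Finset.sum_add_distrib, Finset.sum_sub_distrib,
    Finset.mul_sum, mul_assoc]

lemma mul_diagonal_mul_transpose_apply {m n : ℕ} (X : Matrix (Fin m) (Fin n) ℝ) (v : Fin n → ℝ)
    (a b : Fin m) : (X * diagonal v * Xᵀ) a b = ∑ j, v j * X a j * X b j := by
  rw [mul_apply]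
  simp only [mul_diagonal, transpose_apply]
  exact Finset.sum_congr rfl fun j _ => by ring

lemma sq_mem_doublyStochastic {n : ℕ} {W : Matrix (Fin n) (Fin n) ℝ} (hW : Wᵀ * W = 1) :
    of (fun i k => W i k ^ 2) ∈ doublyStochastic ℝ (Fin n) := by
  have hW' : W * Wᵀ = 1 := mul_eq_one_comm.mp hW
  refine mem_doublyStochastic_iff_sum.mpr ⟨fun i k => sq_nonneg _, fun i => ?_, fun k => ?_⟩
  · simpa [mul_apply, sq] using congrFun (congrFun hW' i) i
  · simpa [mul_apply, sq] using congrFun (congrFun hW k) k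

lemma dotProduct_mulVec_le_of_mem_doublyStochastic {n : Type*} [Fintype n] [DecidableEq n]
    {S : Matrix n n ℝ} (hS : S ∈ doublyStochastic ℝ n) {f g : n → ℝ} (hfg : Monovary f g) :
    f ⬝ᵥ (S *ᵥ g) ≤ f ⬝ᵥ g := by
  rw [← SetLike.mem_coe, doublyStochastic_eq_convexHull_permMatrix] at hS
  have hconvex : ConvexOn ℝ Set.univ fun M : Matrix n n ℝ => f ⬝ᵥ (M *ᵥ g) :=
    ⟨convex_univ, fun M _ N _ a b _ _ _ => le_of_eq (by
      simp only [add_mulVec, smul_mulVec, dotProduct_add, dotProduct_smul, smul_eq_mul])⟩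
  obtain ⟨_, ⟨σ, rfl⟩, hσ⟩ := hconvex.exists_ge_of_mem_convexHull (Set.subset_univ _) hS
  refine hσ.trans ?_
  rw [permMatrix_mulVec]
  exact hfg.sum_mul_comp_perm_le_sum_mul

/-- Hoffman–Wielandt inequality, for one of the two matrices diagonal. -/
lemma sum_sq_sub_le_frobSq_diagonal_sub_conj {n : ℕ} {W : Matrix (Fin n) (Fin n) ℝ}
    (hW : Wᵀ * W = 1) {lam μ : Fin n → ℝ} (h : Monovary lam μ) :
    ∑ i, (lam i - μ i) ^ 2 ≤ frobSq (diagonal lam - W * diagonal μ * Wᵀ) := by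
  have hcross : ∑ i, ∑ j, diagonal lam i j * (W * diagonal μ * Wᵀ) i j
      = lam ⬝ᵥ (of (fun i k => W i k ^ 2) *ᵥ μ) := by
    refine Finset.sum_congr rfl fun i _ => ?_
    rw [Finset.sum_eq_single i (fun j _ hj => by simp [diagonal_apply_ne _ hj.symm]) (by simp),
      diagonal_apply_eq, mul_diagonal_mul_transpose_apply, mulVec, dotProduct, Finset.mul_sum,
      Finset.mul_sum]
    exact Finset.sum_congr rfl fun k _ => by simp only [of_apply]; ring
  have hle := dotProduct_mulVec_le_of_mem_doublyStochastic (sq_mem_doublyStochastic hW) h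
  rw [frobSq_sub, hcross, frobSq_conj hW, frobSq_diagonal, frobSq_diagonal]
  simp only [sub_sq, Finset.sum_add_distrib, Finset.sum_sub_distrib, mul_assoc, ← Finset.mul_sum,
    dotProduct] at hle ⊢
  linarith

lemma exists_orthogonal_diagonalization_antitone {n : ℕ} {B : Matrix (Fin n) (Fin n) ℝ}
    (hB : Bᵀ = B) : ∃ (W : Matrix (Fin n) (Fin n) ℝ) (μ : Fin n → ℝ),
      Wᵀ * W = 1 ∧ Antitone μ ∧ B = W * diagonal μ * Wᵀ := by
  have hH : B.IsHermitian := by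
    rwa [IsHermitian, conjTranspose_eq_transpose_of_trivial]
  set U : Matrix (Fin n) (Fin n) ℝ := (hH.eigenvectorUnitary : Matrix (Fin n) (Fin n) ℝ)
  set ν := hH.eigenvalues
  have hU : Uᵀ * U = 1 := by
    have h := mem_unitaryGroup_iff'.mp hH.eigenvectorUnitary.2
    rwa [star_eq_conjTranspose, conjTranspose_eq_transpose_of_trivial] at h
  have hspec : B = U * diagonal ν * Uᵀ := by
    simpa [Unitary.conjStarAlgAut_apply, star_eq_conjTranspose, RCLike.ofReal_real_eq_id]
      using hH.spectral_theorem
  set τ := Tuple.sort (-ν)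
  refine ⟨U.submatrix id τ, ν ∘ τ, ?_, fun i j hij => ?_, ?_⟩
  · rw [transpose_submatrix, ← submatrix_mul _ _ _ _ _ Function.bijective_id, hU,
      submatrix_one_equiv]
  · simpa using Tuple.monotone_sort (-ν) hij
  · rw [← submatrix_diagonal_equiv, ← submatrix_mul _ _ _ _ _ τ.bijective, transpose_submatrix,
      ← submatrix_mul _ _ _ _ _ τ.bijective, submatrix_id_id, ← hspec]

lemma lorJ_transpose (d : ℕ) : (lorJ d)ᵀ = lorJ d := diagonal_transpose _

lemma dotProduct_lorJ_mulVec {d : ℕ} (u v : Fin (d + 1) → ℝ) :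
    u ⬝ᵥ (lorJ d *ᵥ v) = lprod d u v := by
  simp [lorJ, mulVec_diagonal, dotProduct, Fin.sum_univ_succ, lprod, Fin.succ_ne_zero]
  ring

/-- Otherwise the kernel of `T` meets the span of the coordinates where `μ` is positive. -/
lemma card_pos_le_of_forall_mulVec_eq_zero {ι κ : Type*} [Fintype ι] [Fintype κ] {μ : ι → ℝ}
    (T : Matrix κ ι ℝ) (h : ∀ c, T *ᵥ c = 0 → ∑ k, μ k * c k ^ 2 ≤ 0) :
    #{k | 0 < μ k} ≤ Fintype.card κ := by
  classical
  by_contra! hlt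
  set φ := T.mulVecLin.prod (LinearMap.funLeft ℝ ℝ (Subtype.val : {k // ¬ 0 < μ k} → ι))
  have hdim : Module.finrank ℝ ((κ → ℝ) × ({k // ¬ 0 < μ k} → ℝ)) < Module.finrank ℝ (ι → ℝ) := by
    have hle : Fintype.card {k // 0 < μ k} ≤ Fintype.card ι := Fintype.card_subtype_le _
    rw [Fintype.card_subtype] at hle
    rw [Module.finrank_prod, Module.finrank_fintype_fun_eq_card, Module.finrank_fintype_fun_eq_card,
      Module.finrank_fintype_fun_eq_card, Fintype.card_subtype_compl, Fintype.card_subtype]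
    omega
  obtain ⟨c, hc, hc0⟩ := Submodule.exists_mem_ne_zero_of_ne_bot
    (LinearMap.ker_ne_bot_of_finrank_lt (f := φ) hdim)
  rw [LinearMap.mem_ker, LinearMap.prod_apply, Prod.mk_eq_zero] at hc
  obtain ⟨k, hk⟩ := Function.ne_iff.mp hc0
  have hsupp : ∀ k, ¬ 0 < μ k → c k = 0 := fun k hk => congrFun hc.2 ⟨k, hk⟩
  have hpos : 0 < ∑ k, μ k * c k ^ 2 := by
    refine Finset.sum_pos' (fun j _ => ?_) ⟨k, Finset.mem_univ _, ?_⟩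
    · by_cases hj : 0 < μ j
      · positivity
      · simp [hsupp j hj]
    · have hμk : 0 < μ k := by_contra fun hμ => hk (hsupp k hμ)
      exact mul_pos hμk (sq_pos_of_ne_zero hk)
  exact absurd (h c hc.1) (not_le.mpr hpos)

section LorentzCongruence

variable {d n : ℕ} {T : Matrix (Fin (d + 1)) (Fin n) ℝ} {μ : Fin n → ℝ}

lemma sum_mul_sq_eq_lprod (hT : Tᵀ * lorJ d * T = diagonal μ) (c : Fin n → ℝ) :
    ∑ k, μ k * c k ^ 2 = lprod d (T *ᵥ c) (T *ᵥ c) := by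
  calc ∑ k, μ k * c k ^ 2 = c ⬝ᵥ (diagonal μ *ᵥ c) :=
        Finset.sum_congr rfl fun k _ => by rw [mulVec_diagonal]; ring
    _ = c ⬝ᵥ (Tᵀ *ᵥ (lorJ d *ᵥ (T *ᵥ c))) := by rw [← hT, ← mulVec_mulVec, ← mulVec_mulVec]
    _ = (T *ᵥ c) ⬝ᵥ (lorJ d *ᵥ (T *ᵥ c)) := by rw [dotProduct_mulVec, vecMul_transpose]
    _ = lprod d (T *ᵥ c) (T *ᵥ c) := dotProduct_lorJ_mulVec _ _

lemma card_pos_le_one_of_transpose_mul_lorJ_mul_eq (hT : Tᵀ * lorJ d * T = diagonal μ) :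
    #{k | 0 < μ k} ≤ 1 := by
  refine (card_pos_le_of_forall_mulVec_eq_zero (T.submatrix (fun _ : Fin 1 => 0) id)
    fun c hc => ?_).trans_eq (Fintype.card_fin 1)
  have h0 : (T *ᵥ c) 0 = 0 := congrFun hc 0
  rw [sum_mul_sq_eq_lprod hT, lprod, h0, zero_mul, zero_sub, neg_nonpos]
  exact Finset.sum_nonneg fun _ _ => mul_self_nonneg _

lemma card_neg_le_of_transpose_mul_lorJ_mul_eq (hT : Tᵀ * lorJ d * T = diagonal μ) :
    #{k | μ k < 0} ≤ d := by
  have h := card_pos_le_of_forall_mulVec_eq_zero (μ := -μ) (T.submatrix Fin.succ id)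
    fun c hc => ?_
  · simpa using h
  have hsucc : ∀ i : Fin d, (T *ᵥ c) i.succ = 0 := fun i => congrFun hc i
  simp only [Pi.neg_apply, neg_mul, Finset.sum_neg_distrib, sum_mul_sq_eq_lprod hT, lprod, hsucc,
    mul_zero, Finset.sum_const_zero, sub_zero, neg_nonpos]
  exact mul_self_nonneg _

end LorentzCongruence

lemma Antitone.eq_zero_of_card_pos_le_of_card_neg_le {n p q : ℕ} {μ : Fin n → ℝ}
    (hμ : Antitone μ) (hpos : #{k | 0 < μ k} ≤ p) (hneg : #{k | μ k < 0} ≤ q) {i : Fin n}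
    (hpi : p ≤ i) (hiq : (i : ℕ) + q < n) : μ i = 0 := by
  rcases lt_trichotomy (μ i) 0 with h | h | h
  · have hsub : Finset.Ici i ⊆ ({k | μ k < 0} : Finset (Fin n)) := fun k hk =>
      Finset.mem_filter.mpr ⟨Finset.mem_univ _, (hμ (Finset.mem_Ici.mp hk)).trans_lt h⟩
    have := (Finset.card_le_card hsub).trans hneg
    rw [Fin.card_Ici] at this
    omega
  · exact h
  · have hsub : Finset.Iic i ⊆ ({k | 0 < μ k} : Finset (Fin n)) := fun k hk =>
      Finset.mem_filter.mpr ⟨Finset.mem_univ _, h.trans_le (hμ (Finset.mem_Iic.mp hk))⟩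
    have := (Finset.card_le_card hsub).trans hpos
    rw [Fin.card_Iic] at this
    omega

lemma sum_sq_le_frobSq_diagonal_sub_mul_lorJ_mul_transpose {d n : ℕ} {lam : Fin n → ℝ}
    (hlam : Antitone lam) (Y : Matrix (Fin n) (Fin (d + 1)) ℝ) :
    ∑ i : Fin n with 1 ≤ i.val ∧ i.val + d < n, lam i ^ 2
      ≤ frobSq (diagonal lam - Y * lorJ d * Yᵀ) := by
  obtain ⟨W, μ, hW, hμ, hB⟩ := exists_orthogonal_diagonalization_antitone
    (B := Y * lorJ d * Yᵀ) (by simp only [transpose_mul, transpose_transpose, lorJ_transpose,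
      Matrix.mul_assoc])
  have hT : (Yᵀ * W)ᵀ * lorJ d * (Yᵀ * W) = diagonal μ := by
    calc (Yᵀ * W)ᵀ * lorJ d * (Yᵀ * W) = Wᵀ * (Y * lorJ d * Yᵀ) * W := by
          simp only [transpose_mul, transpose_transpose, Matrix.mul_assoc]
      _ = diagonal μ := by
          rw [hB, ← Matrix.mul_assoc, ← Matrix.mul_assoc, hW, Matrix.one_mul, Matrix.mul_assoc, hW,
            Matrix.mul_one]
  have hzero : ∀ i : Fin n, 1 ≤ (i : ℕ) → (i : ℕ) + d < n → μ i = 0 := fun i =>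
    hμ.eq_zero_of_card_pos_le_of_card_neg_le (card_pos_le_one_of_transpose_mul_lorJ_mul_eq hT)
      (card_neg_le_of_transpose_mul_lorJ_mul_eq hT)
  rw [hB]
  calc ∑ i : Fin n with 1 ≤ i.val ∧ i.val + d < n, lam i ^ 2
        = ∑ i : Fin n with 1 ≤ i.val ∧ i.val + d < n, (lam i - μ i) ^ 2 :=
          Finset.sum_congr rfl fun i hi => by
            obtain ⟨h1, hd⟩ := (Finset.mem_filter.mp hi).2
            rw [hzero i h1 hd, sub_zero]
    _ ≤ ∑ i, (lam i - μ i) ^ 2 :=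
          Finset.sum_le_sum_of_subset_of_nonneg (Finset.filter_subset _ _)
            fun _ _ _ => sq_nonneg _
    _ ≤ _ := sum_sq_sub_le_frobSq_diagonal_sub_conj hW (hlam.monovary hμ)

lemma Antitone.pos_of_sum_pos {n : ℕ} {lam : Fin n → ℝ} (hlam : Antitone lam)
    (hsum : 0 < ∑ i, lam i) (hn : 0 < n) : 0 < lam ⟨0, hn⟩ := by
  by_contra! h
  exact hsum.not_ge
    (Finset.sum_nonpos fun i _ => (hlam (Fin.mk_le_of_le_val (Nat.zero_le _))).trans h)

section LandmarkEmbedding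

variable {d l : ℕ} (hl : d + 1 ≤ l)

lemma val_colIdx (j : Fin (d + 1)) :
    (colIdx hl j : ℕ) = if (j : ℕ) = 0 then 0 else l - d - 1 + j := by
  unfold colIdx
  split_ifs <;> rfl

lemma colIdx_injective : Function.Injective (colIdx hl) := fun j j' h => by
  have h := congrArg Fin.val h
  rw [val_colIdx, val_colIdx] at h
  split_ifs at h <;> omega

lemma image_colIdx :
    Finset.univ.image (colIdx hl) = ({i | ¬ (1 ≤ i.val ∧ i.val + d < l)} : Finset (Fin l)) := by
  ext i
  rw [Finset.mem_image, Finset.mem_filter]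
  simp only [Finset.mem_univ, true_and]
  constructor
  · rintro ⟨j, rfl⟩
    rw [val_colIdx]
    split_ifs <;> omega
  · intro hi
    by_cases h0 : (i : ℕ) = 0
    · exact ⟨0, Fin.ext (by rw [val_colIdx]; simp [h0])⟩
    · refine ⟨⟨i - (l - d - 1), by omega⟩, Fin.ext ?_⟩
      rw [val_colIdx]
      split_ifs <;> simp_all <;> omega

variable {hl} {lam : Fin l → ℝ}

lemma lorJ_apply_mul_sqrt_mul_sqrt (hpos : 0 ≤ lam (colIdx hl 0))
    (hneg : ∀ j, j ≠ 0 → lam (colIdx hl j) ≤ 0) (j : Fin (d + 1)) :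
    (if j = 0 then 1 else -1) *
        (if (j : ℕ) = 0 then √(lam (colIdx hl j)) else √(-lam (colIdx hl j))) *
        (if (j : ℕ) = 0 then √(lam (colIdx hl j)) else √(-lam (colIdx hl j)))
      = lam (colIdx hl j) := by
  by_cases hj : j = 0
  · subst hj
    simp only [if_true, Fin.val_zero, one_mul]
    exact Real.mul_self_sqrt hpos
  · have hj' : (j : ℕ) ≠ 0 := Fin.val_ne_iff.mpr hj
    simp only [hj, hj', if_false, neg_one_mul]
    rw [neg_mul, Real.mul_self_sqrt (neg_nonneg.mpr (hneg j hj)), neg_neg]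

variable (hl) in
lemma hatXL_mul_lorJ_mul_transpose (Q : Matrix (Fin l) (Fin l) ℝ) (hpos : 0 ≤ lam (colIdx hl 0))
    (hneg : ∀ j, j ≠ 0 → lam (colIdx hl j) ≤ 0) :
    hatXL hl Q lam * lorJ d * (hatXL hl Q lam)ᵀ
      = Q * diagonal (fun i => if 1 ≤ i.val ∧ i.val + d < l then 0 else lam i) * Qᵀ := by
  ext a b
  rw [lorJ, mul_diagonal_mul_transpose_apply, mul_diagonal_mul_transpose_apply]
  calc ∑ j, (if j = 0 then 1 else -1) * hatXL hl Q lam a j * hatXL hl Q lam b j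
      = ∑ j, lam (colIdx hl j) * Q a (colIdx hl j) * Q b (colIdx hl j) :=
        Finset.sum_congr rfl fun j _ => by
          rw [← lorJ_apply_mul_sqrt_mul_sqrt hpos hneg j]
          simp only [hatXL, of_apply]
          ring
    _ = ∑ i with ¬ (1 ≤ i.val ∧ i.val + d < l), lam i * Q a i * Q b i := by
        rw [← image_colIdx hl, Finset.sum_image fun j _ j' _ h => colIdx_injective hl h]
    _ = _ := by
        rw [Finset.sum_filter]
        exact Finset.sum_congr rfl fun i _ => by split_ifs <;> simp

end LandmarkEmbedding

lemma frobSq_sub_hatXL_mul_lorJ_mul_transpose {d l : ℕ} (hl : d + 1 ≤ l)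
    {Q : Matrix (Fin l) (Fin l) ℝ} (hQ : Qᵀ * Q = 1) {lam : Fin l → ℝ}
    (hpos : 0 ≤ lam (colIdx hl 0)) (hneg : ∀ j, j ≠ 0 → lam (colIdx hl j) ≤ 0) :
    frobSq (Q * diagonal lam * Qᵀ - hatXL hl Q lam * lorJ d * (hatXL hl Q lam)ᵀ)
      = ∑ i : Fin l with 1 ≤ i.val ∧ i.val + d < l, lam i ^ 2 := by
  rw [hatXL_mul_lorJ_mul_transpose hl Q hpos hneg, ← Matrix.sub_mul, ← Matrix.mul_sub,
    diagonal_sub, frobSq_conj hQ, frobSq_diagonal, Finset.sum_filter]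
  exact Finset.sum_congr rfl fun i _ => by split_ifs <;> simp

lemma conj_sub_mul_lorJ_mul_transpose {d l : ℕ} {Q : Matrix (Fin l) (Fin l) ℝ} (hQ : Qᵀ * Q = 1)
    (M : Matrix (Fin l) (Fin l) ℝ) (X : Matrix (Fin l) (Fin (d + 1)) ℝ) :
    Q * M * Qᵀ - X * lorJ d * Xᵀ = Q * (M - (Qᵀ * X) * lorJ d * (Qᵀ * X)ᵀ) * Qᵀ := by
  have hQ' : Q * Qᵀ = 1 := mul_eq_one_comm.mp hQ
  rw [Matrix.mul_sub, Matrix.sub_mul, transpose_mul, transpose_transpose]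
  simp only [← Matrix.mul_assoc, hQ', Matrix.one_mul]
  rw [Matrix.mul_assoc _ Q, hQ', Matrix.mul_one]

/-- the landmark matrix `X̂_L` built from the eigendecomposition of
`A_L = cosh(√κ D_L)` minimizes the Frobenius distance `‖A_L - X J Xᵀ‖_F`. -/
theorem stmt_2 {d l : ℕ} (hd : 1 ≤ d) (hl : d + 1 ≤ l)
    (D_L : Matrix (Fin l) (Fin l) ℝ)
    (hdiag : ∀ i, D_L i i = 0)
    (κ : ℝ)
    (A_L : Matrix (Fin l) (Fin l) ℝ)
    (hA : A_L = Matrix.of fun i j => Real.cosh (Real.sqrt κ * D_L i j))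
    (Q : Matrix (Fin l) (Fin l) ℝ) (hQ : Qᵀ * Q = 1)
    (lam : Fin l → ℝ) (hdesc : ∀ i j : Fin l, i ≤ j → lam j ≤ lam i)
    (hdecomp : A_L = Q * Matrix.diagonal lam * Qᵀ)
    (hneg : lam ⟨l - d, by omega⟩ < 0) :
    0 < lam ⟨0, by omega⟩ ∧
    ∀ X : Matrix (Fin l) (Fin (d + 1)) ℝ,
      frob (A_L - hatXL hl Q lam * lorJ d * (hatXL hl Q lam)ᵀ) ≤
        frob (A_L - X * lorJ d * Xᵀ) := by
  have hlam : Antitone lam := fun i j hij => hdesc i j hij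
  -- `A_L` has unit diagonal, since `cosh 0 = 1`.
  have htrace : ∑ i, lam i = l := by
    have h := congrArg trace hdecomp
    rw [trace_mul_cycle, hQ, Matrix.one_mul, trace_diagonal, hA] at h
    simp [← h, trace, hdiag]
  have hpos : 0 < lam ⟨0, by omega⟩ :=
    hlam.pos_of_sum_pos (by rw [htrace]; exact_mod_cast (show 0 < l by omega)) _
  have hnonpos : ∀ j, j ≠ 0 → lam (colIdx hl j) ≤ 0 := fun j hj => by
    have hj' : (j : ℕ) ≠ 0 := Fin.val_ne_iff.mpr hj
    refine (hlam (Fin.le_def.mpr ?_)).trans hneg.le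
    rw [val_colIdx, if_neg hj']
    change l - d ≤ l - d - 1 + (j : ℕ)
    omega
  refine ⟨hpos, fun X => Real.sqrt_le_sqrt ?_⟩
  rw [hdecomp, frobSq_sub_hatXL_mul_lorJ_mul_transpose hl hQ hpos.le hnonpos,
    conj_sub_mul_lorJ_mul_transpose hQ, frobSq_conj hQ]
  exact sum_sq_le_frobSq_diagonal_sub_mul_lorJ_mul_transpose hlam _
end

section
/- Let l ≥ d+1 and let λ₁ ≥ λ₂ ≥ ⋯ ≥ λ_l be real numbers with Λ := diag(λ₁, …, λ_l). Then for every Y ∈ ℝ^{l×(d+1)}, ‖Y J Y^⊤ − Λ‖_F² ≥ Σ_{i=2}^{l−d} λ_i². -/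
open Matrix Finset

/-! Set `A = Y J Yᵀ - Λ`. It suffices to find orthonormal vectors `vᵢ`, one for each index `i`
with `2 ≤ i ≤ l - d`, such that `λᵢ² ≤ (vᵢᵀ A vᵢ)²`: Bessel's inequality applied to the rows of `A`
gives `Σ (vᵢᵀ A vᵢ)² ≤ ‖A‖_F²`. Write `vᵀ Y J Yᵀ v = (y₀ ⬝ v)² - Σⱼ (yⱼ ⬝ v)²` for the columns `yⱼ`
of `Y`. If `λᵢ ≥ 0`, take `vᵢ ⊥ y₀` supported on the coordinates `1, …, i`; then
`vᵢᵀ A vᵢ ≤ -vᵢᵀ Λ vᵢ ≤ -λᵢ ≤ 0`. If `λᵢ < 0`, take `vᵢ ⊥ y₁, …, y_d` supported on `i, …, l`; then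
`vᵢᵀ A vᵢ ≥ -λᵢ > 0`. In both cases the constrained subspaces are large enough for a greedy choice
of orthonormal vectors, and vectors of different kinds are orthogonal because `λ` is decreasing,
which makes their supports disjoint. -/

open Module

section Orthonormal
variable {𝕜 E ι : Type*} [RCLike 𝕜] [NormedAddCommGroup E] [InnerProductSpace 𝕜 E] [DecidableEq ι]

local notation "⟪" x ", " y "⟫" => inner 𝕜 x y

theorem orthonormal_finset_iff_ite {s : Finset ι} {v : ι → E} :
    Orthonormal 𝕜 (fun i : s => v i) ↔
      ∀ i ∈ s, ∀ j ∈ s, ⟪v i, v j⟫ = if i = j then 1 else 0 := by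
  rw [orthonormal_iff_ite]
  exact ⟨fun h i hi j hj => (h ⟨i, hi⟩ ⟨j, hj⟩).trans (if_congr Subtype.mk_eq_mk rfl rfl),
    fun h i j => (h i i.2 j j.2).trans (if_congr Subtype.ext_iff.symm rfl rfl)⟩

theorem exists_norm_eq_one_mem_inf_orthogonal [FiniteDimensional 𝕜 E] {U W : Submodule 𝕜 E}
    (h : finrank 𝕜 W < finrank 𝕜 U) : ∃ u ∈ U ⊓ Wᗮ, ‖u‖ = 1 := by
  have hUW : U ⊓ Wᗮ ≠ ⊥ := by
    intro hbot
    have h1 := Submodule.finrank_sup_add_finrank_inf_eq U Wᗮ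
    have h2 := W.finrank_add_finrank_orthogonal
    have h3 := (U ⊔ Wᗮ).finrank_le
    rw [hbot, finrank_bot] at h1
    omega
  obtain ⟨x, hx, hx0⟩ := Submodule.exists_mem_ne_zero_of_ne_bot hUW
  exact ⟨(‖x‖⁻¹ : 𝕜) • x, Submodule.smul_mem _ _ hx, norm_smul_inv_norm hx0⟩

theorem exists_orthonormal_mem_of_card_le_finrank [FiniteDimensional 𝕜 E] (U : ι → Submodule 𝕜 E)
    (s : Finset ι) (hU : ∀ t ⊆ s, t.Nonempty → ∃ i ∈ t, #t ≤ finrank 𝕜 (U i)) :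
    ∃ v : ι → E, Orthonormal 𝕜 (fun i : s => v i) ∧ ∀ i ∈ s, v i ∈ U i := by
  classical
  simp only [orthonormal_finset_iff_ite]
  induction s using Finset.strongInduction with
  | H s ih =>
  obtain rfl | hs := s.eq_empty_or_nonempty
  · exact ⟨0, by simp, by simp⟩
  obtain ⟨i, his, hrank⟩ := hU s subset_rfl hs
  obtain ⟨v, hv_on, hv_mem⟩ := ih (s.erase i) (erase_ssubset his)
    fun t ht => hU t (ht.trans (erase_subset i s))
  set W := Submodule.span 𝕜 ((s.erase i).image v : Set E)
  have hW : finrank 𝕜 W < finrank 𝕜 (U i) := by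
    have : finrank 𝕜 W ≤ _ := finrank_span_finset_le_card ((s.erase i).image v)
    have := card_image_le (s := s.erase i) (f := v)
    have := card_erase_add_one his
    omega
  obtain ⟨u, hu, hu1⟩ := exists_norm_eq_one_mem_inf_orthogonal hW
  have hu_perp : ∀ j ∈ s.erase i, ⟪v j, u⟫ = 0 := fun j hj =>
    (Submodule.mem_inf.1 hu).2 _ (Submodule.subset_span (mem_coe.2 (mem_image_of_mem v hj)))
  have hne : ∀ {j}, j ∈ s → j ≠ i → j ∈ s.erase i := fun hj hji => mem_erase.2 ⟨hji, hj⟩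
  refine ⟨Function.update v i u, fun j hj k hk => ?_, fun j hj => ?_⟩
  · rcases eq_or_ne j i with rfl | hji <;> rcases eq_or_ne k j with rfl | hkj
    · simp [inner_self_eq_norm_sq_to_K, hu1]
    · rw [Function.update_self, Function.update_of_ne hkj, if_neg hkj.symm,
        inner_eq_zero_symm.1 (hu_perp k (hne hk hkj))]
    · rw [Function.update_of_ne hji]
      exact hv_on _ (hne hj hji) _ (hne hj hji)
    · rw [Function.update_of_ne hji, if_neg hkj.symm]
      rcases eq_or_ne k i with rfl | hki
      · rw [Function.update_self, hu_perp j (hne hj hji)]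
      · rw [Function.update_of_ne hki, hv_on j (hne hj hji) k (hne hk hki), if_neg hkj.symm]
  · rcases eq_or_ne j i with rfl | hji
    · simpa using (Submodule.mem_inf.1 hu).1
    · simpa [hji] using hv_mem j (hne hj hji)

theorem Orthonormal.ite_of_filter {p : ι → Prop} [DecidablePred p] {s : Finset ι} {v w : ι → E}
    (hv : Orthonormal 𝕜 (fun i : s.filter p => v i))
    (hw : Orthonormal 𝕜 (fun i : s.filter (¬ p ·) => w i))
    (hvw : ∀ i ∈ s, ∀ j ∈ s, p i → ¬ p j → ⟪v i, w j⟫ = 0) :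
    Orthonormal 𝕜 (fun i : s => if p i then v i else w i) := by
  rw [orthonormal_finset_iff_ite] at hv hw
  refine orthonormal_finset_iff_ite (v := fun i => if p i then v i else w i) |>.2
    fun i hi j hj => ?_
  by_cases hpi : p i <;> by_cases hpj : p j <;> simp only [hpi, hpj, if_true, if_false]
  · exact hv i (mem_filter.2 ⟨hi, hpi⟩) j (mem_filter.2 ⟨hj, hpj⟩)
  · rw [hvw i hi j hj hpi hpj, if_neg (fun h : i = j => hpj (h ▸ hpi))]
  · rw [inner_eq_zero_symm.1 (hvw j hj i hi hpj hpi), if_neg (fun h : i = j => hpi (h ▸ hpj))]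
  · exact hw i (mem_filter.2 ⟨hi, hpi⟩) j (mem_filter.2 ⟨hj, hpj⟩)

end Orthonormal

section Supported
variable {ι : Type*}

def supportedOn (s : Set ι) : Submodule ℝ (EuclideanSpace ℝ ι) where
  carrier := {v | ∀ t ∉ s, v t = 0}
  add_mem' hv hw t ht := by simp [hv t ht, hw t ht]
  zero_mem' _ _ := rfl
  smul_mem' c v hv t ht := by simp [hv t ht]

variable [Fintype ι]

theorem card_le_finrank_supportedOn [DecidableEq ι] (s : Finset ι) :
    #s ≤ finrank ℝ (supportedOn (s : Set ι)) := by
  have hli : LinearIndependent ℝ fun i : s => EuclideanSpace.basisFun ι ℝ i :=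
    (EuclideanSpace.basisFun ι ℝ).orthonormal.linearIndependent.comp _ Subtype.val_injective
  have hle : Submodule.span ℝ (Set.range fun i : s => EuclideanSpace.basisFun ι ℝ i) ≤
      supportedOn (s : Set ι) := by
    rw [Submodule.span_le]
    rintro _ ⟨i, rfl⟩ t ht
    simp [show t ≠ i from fun h => ht (h ▸ i.2)]
  calc #s = Fintype.card s := (Fintype.card_coe s).symm
    _ = _ := (finrank_span_eq_card hli).symm
    _ ≤ _ := Submodule.finrank_mono hle

theorem inner_eq_zero_of_supportedOn {s t : Set ι} (hst : Disjoint s t) {x y : EuclideanSpace ℝ ι}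
    (hx : x ∈ supportedOn s) (hy : y ∈ supportedOn t) : inner ℝ x y = 0 := by
  refine Finset.sum_eq_zero fun i _ => ?_
  by_cases hi : i ∈ s
  · simp [hy i (hst.notMem_of_mem_left hi)]
  · simp [hx i hi]

theorem finrank_supportedOn_inf_ker [DecidableEq ι] {F : Type*} [AddCommGroup F] [Module ℝ F]
    [FiniteDimensional ℝ F] (s : Finset ι) (f : EuclideanSpace ℝ ι →ₗ[ℝ] F) :
    #s - finrank ℝ F ≤ finrank ℝ (supportedOn (s : Set ι) ⊓ LinearMap.ker f : Submodule ℝ _) := by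
  have h1 := Submodule.finrank_sup_add_finrank_inf_eq (supportedOn (s : Set ι)) (LinearMap.ker f)
  have h2 := (supportedOn (s : Set ι) ⊔ LinearMap.ker f).finrank_le
  have h3 := f.finrank_range_add_finrank_ker
  have h4 := (LinearMap.range f).finrank_le
  have h5 := card_le_finrank_supportedOn s
  omega

theorem dotProduct_diagonal_mulVec_self [DecidableEq ι] (lam v : ι → ℝ) :
    v ⬝ᵥ diagonal lam *ᵥ v = ∑ t, lam t * v t ^ 2 := by
  simp only [dotProduct, mulVec_diagonal]
  exact Finset.sum_congr rfl fun t _ => by ring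

end Supported

section Diagonal
variable {ι : Type*} [Fintype ι] [LinearOrder ι] {lam : ι → ℝ}

theorem Antitone.le_dotProduct_diagonal_mulVec_of_supportedOn_Iic (hlam : Antitone lam) {i : ι}
    {v : EuclideanSpace ℝ ι} (hv : v ∈ supportedOn (Set.Iic i)) (hv1 : ‖v‖ = 1) :
    lam i ≤ v.ofLp ⬝ᵥ diagonal lam *ᵥ v.ofLp := by
  rw [dotProduct_diagonal_mulVec_self]
  have hsum : ∑ t, v t ^ 2 = 1 := by rw [← EuclideanSpace.real_norm_sq_eq, hv1, one_pow]
  have hterm : ∀ t, lam i * v t ^ 2 ≤ lam t * v t ^ 2 := fun t => by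
    by_cases ht : t ≤ i
    · exact mul_le_mul_of_nonneg_right (hlam ht) (sq_nonneg _)
    · simp [hv t ht]
  calc lam i = ∑ t, lam i * v t ^ 2 := by rw [← Finset.mul_sum, hsum, mul_one]
    _ ≤ _ := Finset.sum_le_sum fun t _ => hterm t

theorem Antitone.dotProduct_diagonal_mulVec_le_of_supportedOn_Ici (hlam : Antitone lam) {i : ι}
    {v : EuclideanSpace ℝ ι} (hv : v ∈ supportedOn (Set.Ici i)) (hv1 : ‖v‖ = 1) :
    v.ofLp ⬝ᵥ diagonal lam *ᵥ v.ofLp ≤ lam i := by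
  rw [dotProduct_diagonal_mulVec_self]
  have hsum : ∑ t, v t ^ 2 = 1 := by rw [← EuclideanSpace.real_norm_sq_eq, hv1, one_pow]
  have hterm : ∀ t, lam t * v t ^ 2 ≤ lam i * v t ^ 2 := fun t => by
    by_cases ht : i ≤ t
    · exact mul_le_mul_of_nonneg_right (hlam ht) (sq_nonneg _)
    · simp [hv t ht]
  calc _ ≤ ∑ t, lam i * v t ^ 2 := Finset.sum_le_sum fun t _ => hterm t
    _ = lam i := by rw [← Finset.mul_sum, hsum, mul_one]

end Diagonal

theorem sum_sq_dotProduct_mulVec_le_frobSq {n : ℕ} {ι : Type*} [Fintype ι]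
    {v : ι → EuclideanSpace ℝ (Fin n)} (hv : Orthonormal ℝ v) (A : Matrix (Fin n) (Fin n) ℝ) :
    ∑ i, ((v i).ofLp ⬝ᵥ A *ᵥ (v i).ofLp) ^ 2 ≤ frobSq A := by
  set row : Fin n → EuclideanSpace ℝ (Fin n) := fun t => WithLp.toLp 2 (A t)
  have hrow : ∀ i t, (A *ᵥ (v i).ofLp) t = inner ℝ (v i) (row t) := fun i t => by
    simp [row, EuclideanSpace.inner_eq_star_dotProduct, mulVec]
  calc ∑ i, ((v i).ofLp ⬝ᵥ A *ᵥ (v i).ofLp) ^ 2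
      ≤ ∑ i, ‖WithLp.toLp 2 (A *ᵥ (v i).ofLp)‖ ^ 2 := Finset.sum_le_sum fun i _ => by
        have := abs_real_inner_le_norm (v i) (WithLp.toLp 2 (A *ᵥ (v i).ofLp))
        rw [hv.1 i, one_mul, EuclideanSpace.inner_eq_star_dotProduct, star_trivial,
          dotProduct_comm] at this
        simpa only [sq_abs] using pow_le_pow_left₀ (abs_nonneg _) this 2
    _ = ∑ t, ∑ i, ‖inner ℝ (v i) (row t)‖ ^ 2 := by
        simp only [EuclideanSpace.norm_sq_eq, hrow]
        exact Finset.sum_comm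
    _ ≤ ∑ t, ‖row t‖ ^ 2 := Finset.sum_le_sum fun t _ => hv.sum_inner_products_le (row t)
    _ = frobSq A := by simp [EuclideanSpace.real_norm_sq_eq, row, frobSq]

section Interval
variable {n : ℕ} {F : Type*} [AddCommGroup F] [Module ℝ F] [FiniteDimensional ℝ F]

theorem exists_orthonormal_supportedOn_Iic_ker (f : EuclideanSpace ℝ (Fin n) →ₗ[ℝ] F)
    (s : Finset (Fin n)) (hs : ∀ i ∈ s, finrank ℝ F ≤ i) :
    ∃ v : Fin n → EuclideanSpace ℝ (Fin n), Orthonormal ℝ (fun i : s => v i) ∧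
      ∀ i ∈ s, v i ∈ supportedOn (Set.Iic i) ∧ f (v i) = 0 := by
  obtain ⟨v, hv, hmem⟩ := exists_orthonormal_mem_of_card_le_finrank
    (fun i => supportedOn (Set.Iic i) ⊓ LinearMap.ker f) s fun t hts ht => by
      refine ⟨t.max' ht, t.max'_mem ht, ?_⟩
      have hcard : #t ≤ #(Finset.Icc (finrank ℝ F) (t.max' ht : ℕ)) :=
        card_le_card_of_injOn (fun j => (j : ℕ))
          (fun j hj => Finset.mem_Icc.2 ⟨hs j (hts hj), t.le_max' j hj⟩) Fin.val_injective.injOn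
      have hrank := finrank_supportedOn_inf_ker (Finset.Iic (t.max' ht)) f
      rw [Fin.card_Iic, Finset.coe_Iic] at hrank
      rw [Nat.card_Icc] at hcard
      omega
  exact ⟨v, hv, fun i hi => Submodule.mem_inf.1 (hmem i hi)⟩

theorem exists_orthonormal_supportedOn_Ici_ker (f : EuclideanSpace ℝ (Fin n) →ₗ[ℝ] F)
    (s : Finset (Fin n)) (hs : ∀ i ∈ s, i + finrank ℝ F < n) :
    ∃ v : Fin n → EuclideanSpace ℝ (Fin n), Orthonormal ℝ (fun i : s => v i) ∧
      ∀ i ∈ s, v i ∈ supportedOn (Set.Ici i) ∧ f (v i) = 0 := by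
  obtain ⟨v, hv, hmem⟩ := exists_orthonormal_mem_of_card_le_finrank
    (fun i => supportedOn (Set.Ici i) ⊓ LinearMap.ker f) s fun t hts ht => by
      refine ⟨t.min' ht, t.min'_mem ht, ?_⟩
      have hcard : #t ≤ #(Finset.Ico (t.min' ht : ℕ) (n - finrank ℝ F)) :=
        card_le_card_of_injOn (fun j => (j : ℕ))
          (fun j hj => Finset.mem_Ico.2 ⟨t.min'_le j hj, Nat.lt_sub_of_add_lt (hs j (hts hj))⟩)
          Fin.val_injective.injOn
      have hrank := finrank_supportedOn_inf_ker (Finset.Ici (t.min' ht)) f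
      rw [Fin.card_Ici, Finset.coe_Ici] at hrank
      rw [Nat.card_Ico] at hcard
      omega
  exact ⟨v, hv, fun i hi => Submodule.mem_inf.1 (hmem i hi)⟩

end Interval

section Lorentz
variable {d l : ℕ} (Y : Matrix (Fin l) (Fin (d + 1)) ℝ) {lam : Fin l → ℝ}

theorem dotProduct_lorJ_mulVec_s7 (x : Fin (d + 1) → ℝ) :
    x ⬝ᵥ lorJ d *ᵥ x = x 0 ^ 2 - ∑ j : Fin d, x j.succ ^ 2 := by
  simp only [lorJ, dotProduct, mulVec_diagonal, Fin.sum_univ_succ, if_pos, Fin.succ_ne_zero,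
    if_false]
  simp [sq, sub_eq_add_neg]

theorem dotProduct_mul_lorJ_mul_transpose_mulVec (v : Fin l → ℝ) :
    v ⬝ᵥ (Y * lorJ d * Yᵀ) *ᵥ v = (Yᵀ *ᵥ v) ⬝ᵥ lorJ d *ᵥ (Yᵀ *ᵥ v) := by
  rw [← mulVec_mulVec, ← mulVec_mulVec, dotProduct_mulVec, ← mulVec_transpose]

theorem dotProduct_sub_diagonal_mulVec (v : Fin l → ℝ) :
    v ⬝ᵥ (Y * lorJ d * Yᵀ - diagonal lam) *ᵥ v =
      (Yᵀ *ᵥ v) 0 ^ 2 - ∑ j : Fin d, (Yᵀ *ᵥ v) j.succ ^ 2 - v ⬝ᵥ diagonal lam *ᵥ v := by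
  rw [sub_mulVec, dotProduct_sub, dotProduct_mul_lorJ_mul_transpose_mulVec, dotProduct_lorJ_mulVec_s7]

theorem sq_le_sq_dotProduct_mulVec_of_nonneg (hlam : Antitone lam) {i : Fin l} (hi : 0 ≤ lam i)
    {v : EuclideanSpace ℝ (Fin l)} (hv : v ∈ supportedOn (Set.Iic i)) (hv1 : ‖v‖ = 1)
    (hY : (Yᵀ *ᵥ v.ofLp) 0 = 0) :
    lam i ^ 2 ≤ (v.ofLp ⬝ᵥ (Y * lorJ d * Yᵀ - diagonal lam) *ᵥ v.ofLp) ^ 2 := by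
  have hdiag := hlam.le_dotProduct_diagonal_mulVec_of_supportedOn_Iic hv hv1
  have hspace : 0 ≤ ∑ j : Fin d, (Yᵀ *ᵥ v.ofLp) j.succ ^ 2 := by positivity
  rw [dotProduct_sub_diagonal_mulVec, hY]
  nlinarith

theorem sq_le_sq_dotProduct_mulVec_of_nonpos (hlam : Antitone lam) {i : Fin l} (hi : lam i ≤ 0)
    {v : EuclideanSpace ℝ (Fin l)} (hv : v ∈ supportedOn (Set.Ici i)) (hv1 : ‖v‖ = 1)
    (hY : ∀ j : Fin d, (Yᵀ *ᵥ v.ofLp) j.succ = 0) :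
    lam i ^ 2 ≤ (v.ofLp ⬝ᵥ (Y * lorJ d * Yᵀ - diagonal lam) *ᵥ v.ofLp) ^ 2 := by
  have hdiag := hlam.dotProduct_diagonal_mulVec_le_of_supportedOn_Ici hv hv1
  have hspace : ∑ j : Fin d, (Yᵀ *ᵥ v.ofLp) j.succ ^ 2 = 0 := by simp [hY]
  rw [dotProduct_sub_diagonal_mulVec, hspace]
  nlinarith [sq_nonneg ((Yᵀ *ᵥ v.ofLp) 0)]

theorem exists_orthonormal_sq_le_sq_dotProduct_mulVec (hlam : Antitone lam) (s : Finset (Fin l))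
    (hs : ∀ i ∈ s, 1 ≤ (i : ℕ) ∧ (i : ℕ) + d < l) :
    ∃ v : Fin l → EuclideanSpace ℝ (Fin l), Orthonormal ℝ (fun i : s => v i) ∧
      ∀ i ∈ s, lam i ^ 2 ≤ ((v i).ofLp ⬝ᵥ (Y * lorJ d * Yᵀ - diagonal lam) *ᵥ (v i).ofLp) ^ 2 := by
  let coords := (WithLp.linearEquiv 2 ℝ (Fin l → ℝ)).toLinearMap
  let timelike := LinearMap.proj 0 ∘ₗ toLin' Yᵀ ∘ₗ coords
  let spacelike := LinearMap.funLeft ℝ ℝ Fin.succ ∘ₗ toLin' Yᵀ ∘ₗ coords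
  obtain ⟨u, hu, hu_mem⟩ := exists_orthonormal_supportedOn_Iic_ker timelike
    (s.filter (0 ≤ lam ·)) fun i hi => by simpa using (hs i (mem_filter.1 hi).1).1
  obtain ⟨w, hw, hw_mem⟩ := exists_orthonormal_supportedOn_Ici_ker spacelike
    (s.filter (¬ 0 ≤ lam ·)) fun i hi => by simpa using (hs i (mem_filter.1 hi).1).2
  refine ⟨fun i => if 0 ≤ lam i then u i else w i, hu.ite_of_filter hw ?_, fun i hi => ?_⟩
  · intro i hi j hj hpi hpj
    have hij : i < j := lt_of_not_ge fun hji => hpj (hpi.trans (hlam hji))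
    exact inner_eq_zero_of_supportedOn (Set.Iic_disjoint_Ici.2 (not_le.2 hij))
      (hu_mem i (mem_filter.2 ⟨hi, hpi⟩)).1 (hw_mem j (mem_filter.2 ⟨hj, hpj⟩)).1
  · by_cases hpi : 0 ≤ lam i
    · have hiP : i ∈ s.filter (0 ≤ lam ·) := mem_filter.2 ⟨hi, hpi⟩
      obtain ⟨hsupp, hker⟩ := hu_mem i hiP
      simpa only [hpi, if_true] using
        sq_le_sq_dotProduct_mulVec_of_nonneg Y hlam hpi hsupp (hu.1 ⟨i, hiP⟩) hker
    · have hiN : i ∈ s.filter (¬ 0 ≤ lam ·) := mem_filter.2 ⟨hi, hpi⟩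
      obtain ⟨hsupp, hker⟩ := hw_mem i hiN
      simpa only [hpi, if_false] using
        sq_le_sq_dotProduct_mulVec_of_nonpos Y hlam (le_of_not_ge hpi) hsupp (hw.1 ⟨i, hiN⟩)
          (congrFun hker)

end Lorentz

theorem stmt_7_general {d l : ℕ}
    (lam : Fin l → ℝ) (hdesc : ∀ i j : Fin l, i ≤ j → lam j ≤ lam i) :
    ∀ Y : Matrix (Fin l) (Fin (d + 1)) ℝ,
      (∑ i ∈ Finset.univ.filter (fun i : Fin l => 1 ≤ (i : ℕ) ∧ (i : ℕ) < l - d), lam i ^ 2) ≤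
        frobSq (Y * lorJ d * Yᵀ - Matrix.diagonal lam) := by
  intro Y
  set S := Finset.univ.filter (fun i : Fin l => 1 ≤ (i : ℕ) ∧ (i : ℕ) < l - d)
  obtain ⟨v, hv, hbound⟩ := exists_orthonormal_sq_le_sq_dotProduct_mulVec Y
    (fun i j hij => hdesc i j hij) S fun i hi => by
      simp only [S, mem_filter, mem_univ, true_and] at hi
      omega
  calc ∑ i ∈ S, lam i ^ 2
      ≤ ∑ i ∈ S, ((v i).ofLp ⬝ᵥ (Y * lorJ d * Yᵀ - diagonal lam) *ᵥ (v i).ofLp) ^ 2 :=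
        sum_le_sum hbound
    _ = ∑ i : S, ((v i).ofLp ⬝ᵥ (Y * lorJ d * Yᵀ - diagonal lam) *ᵥ (v i).ofLp) ^ 2 :=
        (sum_coe_sort S _).symm
    _ ≤ _ := sum_sq_dotProduct_mulVec_le_frobSq hv _

/-- lower bound `‖Y J Yᵀ − Λ‖_F² ≥ Σ_{i=2}^{l−d} λ_i²`. -/
theorem stmt_7 {d l : ℕ} (hd : 1 ≤ d) (hl : d + 1 ≤ l)
    (lam : Fin l → ℝ) (hdesc : ∀ i j : Fin l, i ≤ j → lam j ≤ lam i) :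
    ∀ Y : Matrix (Fin l) (Fin (d + 1)) ℝ,
      (∑ i ∈ Finset.univ.filter (fun i : Fin l => 1 ≤ (i : ℕ) ∧ (i : ℕ) < l - d), lam i ^ 2) ≤
        frobSq (Y * lorJ d * Yᵀ - Matrix.diagonal lam) :=
  stmt_7_general lam hdesc
end

section
/- (Recovery of landmarks up to positive Lorentz isometry.) Let l ≥ d+1 and let X, Y ∈ ℝ^{l×(d+1)} both have rank d+1, with every row of X and every row of Y lying in H_d. If X J X^⊤ = Y J Y^⊤, then there exists a positive Lorentz matrix T such that Y = X T. -/
open Matrix Finset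

/-!
Full column rank gives left inverses `L_X`, `L_Y`, and then `T := J Xᵀ L_Yᵀ J` satisfies
`Y = X T` because `Y J Yᵀ = X J Xᵀ`. Cancelling `X` in `X (T J Tᵀ) Xᵀ = Y J Yᵀ = X J Xᵀ` shows
that `T` is Lorentz. Its first row `t` has `t ∘ t = 1` and `y ∘ t = x₁ > 0` for corresponding
rows `x` of `X` and `y` of `Y` (from `X J = Y J Tᵀ`), so `t₁ > 0` since `y` lies in `H_d`.
-/

namespace Matrix

variable {m n K R : Type*} [Fintype m] [Fintype n] [DecidableEq n]

theorem exists_mul_eq_one_of_rank_eq_card [Field K] {A : Matrix m n K}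
    (h : A.rank = Fintype.card n) : ∃ B : Matrix n m K, B * A = 1 := by
  have hrange : LinearMap.range Aᵀ.mulVecLin = ⊤ := by
    apply Submodule.eq_top_of_finrank_eq
    rw [Module.finrank_fintype_fun_eq_card, ← h, ← rank_transpose]
    rfl
  have hsurj : Function.Surjective Aᵀ.mulVec := LinearMap.range_eq_top.mp hrange
  obtain ⟨B, hB⟩ := mulVec_surjective_iff_exists_right_inverse.mp hsurj
  exact ⟨Bᵀ, by simpa using congrArg transpose hB⟩

variable [CommRing R]

theorem eq_mul_of_mul_mul_transpose_eq {X Y : Matrix m n R} {G G' : Matrix n n R}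
    (hG : G * G' = 1) {L : Matrix n m R} (hL : L * Y = 1) (h : X * G * Xᵀ = Y * G * Yᵀ) :
    Y = X * (G * Xᵀ * Lᵀ * G') :=
  calc Y = Y * G * (L * Y)ᵀ * G' := by
        rw [hL, transpose_one, Matrix.mul_one, Matrix.mul_assoc, hG, Matrix.mul_one]
    _ = X * (G * Xᵀ * Lᵀ * G') := by
        rw [transpose_mul, ← Matrix.mul_assoc (Y * G), ← h]
        simp only [Matrix.mul_assoc]

theorem mul_mul_transpose_injective {X : Matrix m n R} {L : Matrix n m R} (hL : L * X = 1) :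
    Function.Injective fun A : Matrix n n R => X * A * Xᵀ := by
  intro A B h
  have h' := congrArg (fun M => L * M * Lᵀ) h
  have key : ∀ C : Matrix n n R, L * (X * C * Xᵀ) * Lᵀ = C := fun C => by
    rw [show L * (X * C * Xᵀ) * Lᵀ = L * X * C * (L * X)ᵀ by
      simp only [transpose_mul, Matrix.mul_assoc], hL, transpose_one, Matrix.one_mul,
      Matrix.mul_one]
  simpa only [key] using h'

theorem transpose_mul_mul_eq_of_mul_mul_transpose_eq {T G G' : Matrix n n R} (hG : G * G' = 1)
    (h : T * G * Tᵀ = G) : Tᵀ * G' * T = G' := by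
  have hright : T * (G * Tᵀ * G') = 1 := by
    rw [← Matrix.mul_assoc, ← Matrix.mul_assoc, h, hG]
  have hleft : G * Tᵀ * G' * T = 1 := mul_eq_one_comm.mp hright
  have hG' : G' * G = 1 := mul_eq_one_comm.mp hG
  calc Tᵀ * G' * T = G' * (G * Tᵀ * G' * T) := by
        simp only [← Matrix.mul_assoc, hG', Matrix.one_mul]
    _ = G' := by rw [hleft, Matrix.mul_one]

end Matrix

theorem lorJ_mul_self (d : ℕ) : lorJ d * lorJ d = 1 := by
  rw [lorJ, diagonal_mul_diagonal, ← diagonal_one]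
  congr 1
  ext i
  split_ifs <;> norm_num

theorem mul_lorJ_mul_transpose_apply {d : ℕ} {m m' : Type*} (A : Matrix m (Fin (d + 1)) ℝ)
    (B : Matrix m' (Fin (d + 1)) ℝ) (i : m) (j : m') :
    (A * lorJ d * Bᵀ) i j = lprod d (A i) (B j) := by
  rw [mul_apply]
  simp only [lorJ, mul_diagonal, transpose_apply]
  rw [Fin.sum_univ_succ]
  simp [lprod, Fin.succ_ne_zero, sub_eq_add_neg]

theorem mul_lorJ_apply_zero {d : ℕ} {m : Type*} (A : Matrix m (Fin (d + 1)) ℝ) (i : m) :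
    (A * lorJ d) i 0 = A i 0 := by
  simp [lorJ]

/-- Reversed Cauchy–Schwarz: timelike vectors with positive Lorentz product lie in the same
half of the light cone. -/
theorem apply_zero_pos_of_lprod_pos {d : ℕ} {x y : Fin (d + 1) → ℝ} (hx : 0 < lprod d x x)
    (hy : 0 < lprod d y y) (hxy : 0 < lprod d x y) (hx0 : 0 < x 0) : 0 < y 0 := by
  unfold lprod at hx hy hxy
  set s := ∑ i : Fin d, x i.succ * y i.succ
  have hcs : s ^ 2 ≤ (∑ i : Fin d, x i.succ ^ 2) * ∑ i : Fin d, y i.succ ^ 2 :=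
    sum_mul_sq_le_sq_mul_sq _ _ _
  simp only [← sq] at hx hy
  have hSx : 0 ≤ ∑ i : Fin d, x i.succ ^ 2 := sum_nonneg fun i _ => sq_nonneg _
  have hSy : 0 ≤ ∑ i : Fin d, y i.succ ^ 2 := sum_nonneg fun i _ => sq_nonneg _
  by_contra! hy0
  have hs : s < x 0 * y 0 := by linarith
  have hxy0 : x 0 * y 0 ≤ 0 := mul_nonpos_of_nonneg_of_nonpos hx0.le hy0
  nlinarith [mul_pos (sub_pos.2 hs) (by linarith : 0 < -(s + x 0 * y 0)),
    mul_pos (sub_pos.2 hx) (sub_pos.2 hy), mul_nonneg hSx hSy]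

theorem stmt_12_general {d l : ℕ} (hl : d + 1 ≤ l)
    (X Y : Matrix (Fin l) (Fin (d + 1)) ℝ)
    (hXrank : X.rank = d + 1) (hYrank : Y.rank = d + 1)
    (hXrows : ∀ i, onHyperboloid d (X i)) (hYrows : ∀ i, onHyperboloid d (Y i))
    (hGram : X * lorJ d * Xᵀ = Y * lorJ d * Yᵀ) :
    ∃ T : Matrix (Fin (d + 1)) (Fin (d + 1)) ℝ, IsPosLorentz d T ∧ Y = X * T := by
  have hJ := lorJ_mul_self d
  obtain ⟨LX, hLX⟩ := exists_mul_eq_one_of_rank_eq_card (A := X) (by simpa using hXrank)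
  obtain ⟨LY, hLY⟩ := exists_mul_eq_one_of_rank_eq_card (A := Y) (by simpa using hYrank)
  set T := lorJ d * Xᵀ * LYᵀ * lorJ d
  have hYXT : Y = X * T := eq_mul_of_mul_mul_transpose_eq hJ hLY hGram
  have hTJT : T * lorJ d * Tᵀ = lorJ d := mul_mul_transpose_injective hLX <|
    calc X * (T * lorJ d * Tᵀ) * Xᵀ = X * T * lorJ d * (X * T)ᵀ := by
          simp only [transpose_mul, Matrix.mul_assoc]
      _ = X * lorJ d * Xᵀ := by rw [← hYXT, hGram]
  have hXJ : X * lorJ d = Y * lorJ d * Tᵀ :=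
    calc X * lorJ d = X * (T * lorJ d * Tᵀ) := by rw [hTJT]
      _ = Y * lorJ d * Tᵀ := by rw [hYXT]; simp only [Matrix.mul_assoc]
  let i : Fin l := ⟨0, by omega⟩
  have hT00 : 0 < T 0 0 := by
    refine apply_zero_pos_of_lprod_pos (x := Y i) ?_ ?_ ?_ (hYrows i).2
    · rw [(hYrows i).1]; exact one_pos
    · rw [← mul_lorJ_mul_transpose_apply T T 0 0, hTJT]; simp [lorJ]
    · rw [← mul_lorJ_mul_transpose_apply Y T i 0, ← hXJ, mul_lorJ_apply_zero]
      exact (hXrows i).2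
  exact ⟨T, ⟨transpose_mul_mul_eq_of_mul_mul_transpose_eq hJ hTJT, hT00⟩, hYXT⟩

/-- recovery of landmarks up to positive Lorentz isometry. -/
theorem stmt_12 {d l : ℕ} (hd : 1 ≤ d) (hl : d + 1 ≤ l)
    (X Y : Matrix (Fin l) (Fin (d + 1)) ℝ)
    (hXrank : X.rank = d + 1) (hYrank : Y.rank = d + 1)
    (hXrows : ∀ i, onHyperboloid d (X i)) (hYrows : ∀ i, onHyperboloid d (Y i))
    (hGram : X * lorJ d * Xᵀ = Y * lorJ d * Yᵀ) :
    ∃ T : Matrix (Fin (d + 1)) (Fin (d + 1)) ℝ, IsPosLorentz d T ∧ Y = X * T :=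
  stmt_12_general hl X Y hXrank hYrank hXrows hYrows hGram
end
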